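/- For every positive integer n, 1 + Σ_{i=2}^{n} (1 + F_i F_{i−1})^2 + 2 Σ_{i=2}^{n} Σ_{j=2}^{i} (F_{j−1} + Σ_{k=j+1}^{i} F_{k−1} F_{k−j})^2 = (1/25) L_{4n} + ((3 + (−1)^n)/25) L_{2n} + (2/5) n F_{2n} + (13(−1)^n − 33)/50 + n, as an identity of rational numbers. -/

import Mathlib

/-- The Lucas numbers: L₀ = 2, L₁ = 1, Lₖ = Lₖ₋₁ + Lₖ₋₂. -/
def lucas : ℕ → ℕ
  | 0 => 2
  | 1 => 1
  | n + 2 => lucas (n + 1) + lucas n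

section Aux

private lemma fibQ (n : ℕ) : (Nat.fib (n+2) : ℚ) = Nat.fib (n+1) + Nat.fib n := by
  rw [Nat.fib_add_two]; push_cast; ring

private lemma cassini (n : ℕ) :
    (Nat.fib (n+1) : ℚ)^2 - Nat.fib (n+1) * Nat.fib n - (Nat.fib n : ℚ)^2 = (-1)^n := by
  induction n with
  | zero => simp
  | succ n ih => rw [fibQ, pow_succ]; linear_combination -ih

private lemma docagne (d n : ℕ) :
    (Nat.fib (n+d) : ℚ) * Nat.fib (n+1) - (Nat.fib (n+d+1) : ℚ) * Nat.fib n
      = (-1)^n * Nat.fib d := by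
  induction n with
  | zero => simp
  | succ n ih =>
      rw [show n+1+1 = n+2 by omega, show n+1+d+1 = n+d+2 by omega,
        show n+1+d = n+d+1 by omega, pow_succ]
      linear_combination -ih + (Nat.fib (n+d+1) : ℚ) * fibQ n
        - (Nat.fib (n+1) : ℚ) * fibQ (n+d)

private lemma inner_closed (m t : ℕ) :
    (Nat.fib (m+1) : ℚ) + ∑ k ∈ Finset.Icc (m+3) (m+2+t),
        (Nat.fib (k-1) : ℚ) * Nat.fib (k-(m+2))
      = (Nat.fib (m+2+t) : ℚ) * Nat.fib t + (1+(-1:ℚ)^t)/2 * Nat.fib (m+1) := by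
  induction t with
  | zero => simp
  | succ t ih =>
      rw [show m+2+(t+1) = (m+2+t)+1 by omega,
        Finset.sum_Icc_succ_top (by omega : m+3 ≤ m+2+t+1)]
      rw [show m+2+t+1-1 = m+2+t by omega, show m+2+t+1-(m+2) = t+1 by omega]
      have hd := docagne (m+1) t
      rw [show t+(m+1) = m+1+t by omega] at hd
      rw [show m+1+t+1 = m+2+t by omega] at hd
      have hf : (Nat.fib (m+2+t+1) : ℚ) = Nat.fib (m+2+t) + Nat.fib (m+1+t) := by
        rw [show m+2+t+1 = (m+1+t)+2 by omega, fibQ, show m+1+t+1 = m+2+t by omega]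
      rw [pow_succ]
      linear_combination ih - hd - (Nat.fib (t+1) : ℚ) * hf

private noncomputable def Bs (N : ℕ) : ℚ :=
  ∑ t ∈ Finset.range (N+1), (1+(-1:ℚ)^t) * Nat.fib t * Nat.fib (N+1-t)
private noncomputable def Cs (N : ℕ) : ℚ :=
  ∑ t ∈ Finset.range (N+1), (1+(-1:ℚ)^t)/2 * (Nat.fib (N+1-t):ℚ)^2
private noncomputable def Ds (N : ℕ) : ℚ :=
  ∑ t ∈ Finset.range (N+1), (1+(-1:ℚ)^t)/2 * Nat.fib (N+2-t) * Nat.fib (N+1-t)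

private lemma recB (N : ℕ) :
    Bs (N+2) = Bs (N+1) + Bs N + (1+(-1:ℚ)^N) * Nat.fib (N+2) := by
  have hsplit : ∀ t ∈ Finset.range (N+1),
      (1+(-1:ℚ)^t) * Nat.fib t * Nat.fib (N+2+1-t)
        = (1+(-1:ℚ)^t) * Nat.fib t * Nat.fib (N+1+1-t)
          + (1+(-1:ℚ)^t) * Nat.fib t * Nat.fib (N+1-t) := by
    intro t ht
    have h : t ≤ N := Nat.lt_succ_iff.mp (Finset.mem_range.mp ht)
    rw [show N+2+1-t = (N+1-t)+2 by omega, fibQ,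
      show N+1-t+1 = N+1+1-t by omega]
    ring
  simp only [Bs]
  rw [Finset.sum_range_succ, Finset.sum_range_succ, Finset.sum_congr rfl hsplit,
    Finset.sum_add_distrib, Finset.sum_range_succ (n := N+1)]
  rw [show N+2+1-(N+1) = 2 by omega, show N+2+1-(N+2) = 1 by omega,
    show N+1+1-(N+1) = 1 by omega]
  simp only [Nat.fib_one, Nat.fib_two, pow_succ]
  push_cast
  ring

private lemma recD (N : ℕ) : Ds (N+1) = Ds N + Cs (N+1) := by
  have hsplit : ∀ t ∈ Finset.range (N+1),
      (1+(-1:ℚ)^t)/2 * Nat.fib (N+1+2-t) * Nat.fib (N+1+1-t)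
        = (1+(-1:ℚ)^t)/2 * (Nat.fib (N+1+1-t):ℚ)^2
          + (1+(-1:ℚ)^t)/2 * Nat.fib (N+2-t) * Nat.fib (N+1-t) := by
    intro t ht
    have h : t ≤ N := Nat.lt_succ_iff.mp (Finset.mem_range.mp ht)
    rw [show N+1+2-t = (N+1-t)+2 by omega, fibQ,
      show N+1-t+1 = N+1+1-t by omega, show N+2-t = N+1+1-t by omega]
    ring
  simp only [Ds, Cs]
  rw [Finset.sum_range_succ, Finset.sum_congr rfl hsplit, Finset.sum_add_distrib,
    Finset.sum_range_succ (n := N+1)]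
  rw [show N+1+2-(N+1) = 2 by omega, show N+1+1-(N+1) = 1 by omega]
  simp only [Nat.fib_one, Nat.fib_two]
  push_cast
  ring

private lemma recC (N : ℕ) :
    Cs (N+2) = Cs (N+1) + Cs N + 2 * Ds N + (1+(-1:ℚ)^N)/2 := by
  have hsplit : ∀ t ∈ Finset.range (N+1),
      (1+(-1:ℚ)^t)/2 * (Nat.fib (N+2+1-t):ℚ)^2
        = (1+(-1:ℚ)^t)/2 * (Nat.fib (N+1+1-t):ℚ)^2
          + (1+(-1:ℚ)^t)/2 * (Nat.fib (N+1-t):ℚ)^2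
          + 2 * ((1+(-1:ℚ)^t)/2 * Nat.fib (N+2-t) * Nat.fib (N+1-t)) := by
    intro t ht
    have h : t ≤ N := Nat.lt_succ_iff.mp (Finset.mem_range.mp ht)
    rw [show N+2+1-t = (N+1-t)+2 by omega, fibQ,
      show N+1-t+1 = N+1+1-t by omega, show N+2-t = N+1+1-t by omega]
    ring
  simp only [Cs, Ds]
  rw [Finset.sum_range_succ, Finset.sum_range_succ, Finset.sum_congr rfl hsplit,
    Finset.sum_add_distrib, Finset.sum_add_distrib, Finset.sum_range_succ (n := N+1)]
  rw [show N+2+1-(N+1) = 2 by omega, show N+2+1-(N+2) = 1 by omega,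
    show N+1+1-(N+1) = 1 by omega]
  simp only [Nat.fib_one, Nat.fib_two, pow_succ]
  rw [Finset.mul_sum]
  push_cast
  ring

private noncomputable def BC (N : ℕ) : ℚ :=
  (-9/10 - N/5 + (-1:ℚ)^N/2) * Nat.fib (N+1) + (2/5 + 2*N/5) * Nat.fib (N+2)
private noncomputable def CC (N : ℕ) : ℚ :=
  (1+N)*(-1:ℚ)^N/5 + (Nat.fib (N+1):ℚ)^2/5 + 3*(Nat.fib (N+1):ℚ)*(Nat.fib (N+2):ℚ)/5
private noncomputable def DC (N : ℕ) : ℚ :=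
  -1/4 - 3*(-1:ℚ)^N/20 + N*(-1:ℚ)^N/10 + 3*(Nat.fib (N+1):ℚ)^2/5
    + 4*(Nat.fib (N+1):ℚ)*(Nat.fib (N+2):ℚ)/5

private lemma closedB (N : ℕ) : Bs N = BC N := by
  have key : ∀ N, Bs N = BC N ∧ Bs (N+1) = BC (N+1) := by
    intro N
    induction N with
    | zero =>
        constructor <;>
          · simp [Bs, BC, Finset.sum_range_succ, Nat.fib_one, Nat.fib_two,
              show Nat.fib 3 = 2 from rfl]
          <;> norm_num
    | succ N ih =>
        refine ⟨ih.2, ?_⟩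
        rw [recB, ih.1, ih.2, BC, BC, BC]
        rw [show N+1+1 = N+2 by omega, show N+2+1 = N+3 by omega,
          show N+2+2 = N+4 by omega]
        have h4 : (Nat.fib (N+4) : ℚ) = Nat.fib (N+3) + Nat.fib (N+2) := by
          rw [show N+4 = (N+2)+2 by omega, fibQ, show N+2+1 = N+3 by omega]
        have h3 : (Nat.fib (N+3) : ℚ) = Nat.fib (N+2) + Nat.fib (N+1) := by
          rw [show N+3 = (N+1)+2 by omega, fibQ, show N+1+1 = N+2 by omega]
        rw [h4, h3]
        push_cast [pow_succ]
        ring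
  exact (key N).1

private lemma closedCD (N : ℕ) : Cs N = CC N ∧ Ds N = DC N := by
  have key : ∀ N, (Cs N = CC N ∧ Ds N = DC N) ∧ Cs (N+1) = CC (N+1) := by
    intro N
    induction N with
    | zero =>
        refine ⟨⟨?_, ?_⟩, ?_⟩ <;>
          · simp [Cs, Ds, CC, DC, Finset.sum_range_succ, Nat.fib_one, Nat.fib_two,
              show Nat.fib 3 = 2 from rfl]
          <;> norm_num
    | succ N ih =>
        obtain ⟨⟨hC, hD⟩, hC1⟩ := ih
        have hcas := cassini (N+1)
        rw [show N+1+1 = N+2 by omega] at hcas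
        have hD1 : Ds (N+1) = DC (N+1) := by
          rw [recD, hD, hC1, DC, DC, CC]
          rw [show N+1+1 = N+2 by omega, show N+1+2 = N+3 by omega]
          have h3 : (Nat.fib (N+3) : ℚ) = Nat.fib (N+2) + Nat.fib (N+1) := by
            rw [show N+3 = (N+1)+2 by omega, fibQ, show N+1+1 = N+2 by omega]
          rw [h3]
          push_cast [pow_succ]
          linear_combination (-3/5 : ℚ) * hcas
        have hC2 : Cs (N+2) = CC (N+2) := by
          rw [recC, hC, hC1, hD, CC, CC, CC, DC]
          rw [show N+1+1 = N+2 by omega, show N+2+1 = N+3 by omega,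
            show N+2+2 = N+4 by omega]
          have h4 : (Nat.fib (N+4) : ℚ) = Nat.fib (N+3) + Nat.fib (N+2) := by
            rw [show N+4 = (N+2)+2 by omega, fibQ, show N+2+1 = N+3 by omega]
          have h3 : (Nat.fib (N+3) : ℚ) = Nat.fib (N+2) + Nat.fib (N+1) := by
            rw [show N+3 = (N+1)+2 by omega, fibQ, show N+1+1 = N+2 by omega]
          rw [h4, h3]
          push_cast [pow_succ]
          linear_combination (-3/5 : ℚ) * hcas
        exact ⟨⟨hC1, hD1⟩, hC2⟩
  exact (key N).1

private lemma rowEq (N : ℕ) :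
    ∑ j ∈ Finset.Icc 2 (N+2), ((Nat.fib (j-1):ℚ)
        + ∑ k ∈ Finset.Icc (j+1) (N+2), (Nat.fib (k-1):ℚ) * Nat.fib (k-j))^2
      = ∑ t ∈ Finset.range (N+1),
          ((Nat.fib (N+2):ℚ) * Nat.fib t + (1+(-1:ℚ)^t)/2 * Nat.fib (N+1-t))^2 := by
  refine Finset.sum_nbij' (fun j => N+2-j) (fun t => N+2-t) ?_ ?_ ?_ ?_ ?_
  · intro j hj
    simp only [Finset.mem_Icc] at hj
    simp only [Finset.mem_range]
    omega
  · intro t ht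
    simp only [Finset.mem_range] at ht
    simp only [Finset.mem_Icc]
    omega
  · intro j hj
    simp only [Finset.mem_Icc] at hj
    omega
  · intro t ht
    simp only [Finset.mem_range] at ht
    omega
  · intro j hj
    simp only [Finset.mem_Icc] at hj
    obtain ⟨m, rfl⟩ : ∃ m, j = m + 2 := ⟨j - 2, by omega⟩
    have h := inner_closed m (N - m)
    rw [show m+2+(N-m) = N+2 by omega, show m+3 = m+2+1 by omega] at h
    rw [show m+2-1 = m+1 by omega, h]
    rw [show N+2-(m+2) = N-m by omega, show N+1-(N-m) = m+1 by omega]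

private lemma sumA (N : ℕ) : ∑ t ∈ Finset.range (N+1), (Nat.fib t : ℚ)^2
    = (Nat.fib N : ℚ) * Nat.fib (N+1) := by
  induction N with
  | zero => simp
  | succ N ih =>
      rw [Finset.sum_range_succ, ih, fibQ]
      ring

private lemma rowClosed (N : ℕ) :
    ∑ t ∈ Finset.range (N+1),
        ((Nat.fib (N+2):ℚ) * Nat.fib t + (1+(-1:ℚ)^t)/2 * Nat.fib (N+1-t))^2
      = (Nat.fib (N+2):ℚ)^2 * ((Nat.fib N : ℚ) * Nat.fib (N+1))
        + (Nat.fib (N+2):ℚ) * Bs N + Cs N := by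
  have hpt : ∀ t ∈ Finset.range (N+1),
      ((Nat.fib (N+2):ℚ) * Nat.fib t + (1+(-1:ℚ)^t)/2 * Nat.fib (N+1-t))^2
        = (Nat.fib (N+2):ℚ)^2 * (Nat.fib t:ℚ)^2
          + (Nat.fib (N+2):ℚ) * ((1+(-1:ℚ)^t) * Nat.fib t * Nat.fib (N+1-t))
          + (1+(-1:ℚ)^t)/2 * (Nat.fib (N+1-t):ℚ)^2 := by
    intro t _
    have hs : ((-1:ℚ)^t) * ((-1:ℚ)^t) = 1 := by
      rw [← pow_add, ← two_mul, pow_mul]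
      norm_num
    linear_combination ((Nat.fib (N+1-t):ℚ)^2/4) * hs
  rw [Finset.sum_congr rfl hpt, Finset.sum_add_distrib, Finset.sum_add_distrib,
    ← Finset.mul_sum, ← Finset.mul_sum, sumA, Bs, Cs]

private lemma lucasQ (n : ℕ) : (lucas n : ℚ) = 2 * Nat.fib (n+1) - Nat.fib n := by
  have key : ∀ n, (lucas n : ℚ) = 2 * Nat.fib (n+1) - Nat.fib n
      ∧ (lucas (n+1) : ℚ) = 2 * Nat.fib (n+2) - Nat.fib (n+1) := by
    intro n
    induction n with
    | zero => norm_num [lucas]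
    | succ n ih =>
        refine ⟨ih.2, ?_⟩
        have hl : (lucas (n+2) : ℚ) = lucas (n+1) + lucas n := by
          rw [show lucas (n+2) = lucas (n+1) + lucas n from rfl]; push_cast; ring
        rw [show n+1+1 = n+2 by omega, hl, ih.1, ih.2,
          show n+2+1 = (n+1)+2 by omega, fibQ (n+1), fibQ n]
        ring
  exact (key n).1

private lemma fib2cast (k : ℕ) :
    (Nat.fib (2*k) : ℚ) = 2*(Nat.fib k:ℚ)*Nat.fib (k+1) - (Nat.fib k:ℚ)^2 := by
  have h : Nat.fib k ≤ 2*Nat.fib (k+1) := by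
    have := Nat.fib_le_fib_succ (n := k); omega
  rw [Nat.fib_two_mul, Nat.cast_mul, Nat.cast_sub h]
  push_cast; ring

private lemma fib2cast1 (k : ℕ) :
    (Nat.fib (2*k+1) : ℚ) = (Nat.fib (k+1):ℚ)^2 + (Nat.fib k:ℚ)^2 := by
  rw [Nat.fib_two_mul_add_one]; push_cast; ring

end Aux

theorem frobenius_norm_sq_formula (n : ℕ) (hn : 0 < n) :
    1 + ∑ i ∈ Finset.Icc 2 n, (1 + (Nat.fib i : ℚ) * Nat.fib (i - 1)) ^ 2
      + 2 * ∑ i ∈ Finset.Icc 2 n, ∑ j ∈ Finset.Icc 2 i,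
          ((Nat.fib (j - 1) : ℚ)
            + ∑ k ∈ Finset.Icc (j + 1) i, (Nat.fib (k - 1) : ℚ) * Nat.fib (k - j)) ^ 2
      = (1 / 25) * lucas (4 * n) + ((3 + (-1 : ℚ) ^ n) / 25) * lucas (2 * n)
        + (2 / 5) * n * Nat.fib (2 * n) + (13 * (-1 : ℚ) ^ n - 33) / 50 + n := by
  induction n, hn using Nat.le_induction with
  | base =>
      rw [Finset.Icc_eq_empty (by omega : ¬(2:ℕ) ≤ 1)]
      simp [show lucas 4 = 7 from rfl, show lucas 2 = 3 from rfl,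
        show Nat.fib 2 = 1 from rfl]
      norm_num
  | succ n hn ih =>
      obtain ⟨M, rfl⟩ : ∃ M, n = M+1 := ⟨n-1, by omega⟩
      rw [Finset.sum_Icc_succ_top (show 2 ≤ M+1+1 by omega),
        Finset.sum_Icc_succ_top (show 2 ≤ M+1+1 by omega)]
      simp only [show M+1+1 = M+2 from by omega]
      rw [rowEq M, rowClosed M, closedB M, (closedCD M).1]
      simp only [BC, CC]
      have h2 : (Nat.fib (M+2) : ℚ) = Nat.fib (M+1) + Nat.fib M := by
        rw [show M+2 = M+2 from rfl, fibQ]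
      have h3 : (Nat.fib (M+3) : ℚ) = Nat.fib (M+2) + Nat.fib (M+1) := by
        rw [show M+3 = (M+1)+2 by omega, fibQ, show M+1+1 = M+2 by omega]
      simp only [show (4:ℕ)*(M+2) = 2*(2*(M+2)) from by ring,
        show (4:ℕ)*(M+1) = 2*(2*(M+1)) from by ring] at ih ⊢
      simp only [lucasQ, fib2cast1, fib2cast] at ih ⊢
      simp only [show M+1+1 = M+2 from by omega, show M+2+1 = M+3 from by omega,
        show M+2-1 = M+1 from by omega] at ih ⊢
      rw [h3]
      rw [h2] at ih ⊢
      simp only [pow_succ] at ih ⊢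
      rw [(cassini M).symm] at ih ⊢
      push_cast at ih ⊢
      linear_combination ih
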